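/- arXiv:0707.3504 — 4 statements merged into one kernel-verified Lean document; each statement's English description precedes it below -/
import Mathlib

section
/- Let D be an irreducible k×k Metzler matrix, c > 0, μ < 0, with positive right eigenvector ξ (D ξ = μ ξ) and positive left eigenvector η (ηᵀ D = μ ηᵀ) normalized so that (ξ, η) = 1; let P be the matrix with entries P_{ij} = ξ_i η_j, and assume e^{(D − μ I)s} → P as s → ∞. Let u : [0,∞) → ℝ^k be a nonnegative solution of the cumulant system with u_0 = λ, where λ ≥ 0 and λ ≠ 0. Then e^{−μ t} u_t converges as t → ∞ to a limit of the form κ ξ with κ > 0. -/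
/-!
Write `y_t = e^{-μt} u_t` and `A = D - μ I`. Then `y' = A y - g` with the nonnegative forcing
`g_t = (c/2) e^{μt} y_t ⊙ y_t`. Since `ηᵀ A = 0`, the mass `η ⬝ y_t` has derivative `-η ⬝ g_t ≤ 0`,
so it decreases and bounds `y`. Hence `g_t = O(e^{μt})` is integrable, and Duhamel's formula
`y_t = e^{tA} λ - ∫₀ᵗ e^{(t-s)A} g_s ds` together with `e^{sA} → P = ξ ηᵀ` and dominated convergence
gives `y_t → P (λ - ∫₀^∞ g) = κ ξ`. Finally `(η ⬝ y)' ≥ -(c/2) M e^{μt} (η ⬝ y)` with `M` the bound on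
`y`, so a Grönwall argument gives `κ = lim η ⬝ y_t ≥ e^{cM/(2μ)} η ⬝ λ > 0`.
-/

open Filter Topology MeasureTheory Set Matrix

theorem Continuous.exists_forall_norm_le_of_tendsto_atTop {E : Type*} [SeminormedAddCommGroup E]
    {f : ℝ → E} (hf : Continuous f) {l : E} (hl : Tendsto f atTop (𝓝 l)) (a : ℝ) :
    ∃ B, ∀ r ∈ Ici a, ‖f r‖ ≤ B := by
  obtain ⟨s, hs, hbdd⟩ := Metric.exists_isBounded_image_of_tendsto hl
  obtain ⟨T, hT⟩ := mem_atTop_sets.1 hs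
  have hcover : f '' Ici a ⊆ f '' Icc a T ∪ f '' s := by
    rintro _ ⟨r, hr, rfl⟩
    rcases le_total r T with h | h
    · exact Or.inl ⟨r, ⟨hr, h⟩, rfl⟩
    · exact Or.inr ⟨r, hT r h, rfl⟩
  obtain ⟨B, hB⟩ := isBounded_iff_forall_norm_le.1
    ((((isCompact_Icc.image hf).isBounded).union hbdd).subset hcover)
  exact ⟨B, fun r hr => hB _ ⟨r, hr, rfl⟩⟩

theorem tendsto_intervalIntegral_apply_sub_of_tendsto {V W : Type*}
    [NormedAddCommGroup V] [NormedSpace ℝ V] [CompleteSpace V]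
    [NormedAddCommGroup W] [NormedSpace ℝ W] [CompleteSpace W]
    {K : ℝ → V →L[ℝ] W} {L : V →L[ℝ] W} (hK : Continuous K) (hKL : Tendsto K atTop (𝓝 L))
    {g : ℝ → V} (hg : IntegrableOn g (Ioi 0)) :
    Tendsto (fun t => ∫ s in (0 : ℝ)..t, K (t - s) (g s)) atTop
      (𝓝 (L (∫ s in Ioi 0, g s))) := by
  obtain ⟨B, hB⟩ := hK.exists_forall_norm_le_of_tendsto_atTop hKL 0
  set F : ℝ → ℝ → W := fun t => (Iic t).indicator fun s => K (t - s) (g s)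
  have hF : ∀ᶠ t in atTop, ∫ s in (0 : ℝ)..t, K (t - s) (g s) = ∫ s in Ioi 0, F t s := by
    filter_upwards [eventually_ge_atTop 0] with t ht
    rw [intervalIntegral.integral_of_le ht, setIntegral_indicator measurableSet_Iic, Ioi_inter_Iic]
  rw [← L.integral_comp_comm hg]
  refine (tendsto_integral_filter_of_dominated_convergence (fun s => B * ‖g s‖) ?_ ?_
    (hg.norm.const_mul B) ?_).congr' (EventuallyEq.symm hF)
  · refine Eventually.of_forall fun t => AEStronglyMeasurable.indicator ?_ measurableSet_Iic
    exact (continuous_fst.clm_apply continuous_snd).comp_aestronglyMeasurable₂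
      (hK.comp (continuous_sub_left t)).aestronglyMeasurable hg.aestronglyMeasurable
  · refine Eventually.of_forall fun t => Eventually.of_forall fun s => ?_
    by_cases hs : s ∈ Iic t
    · rw [show F t s = K (t - s) (g s) from indicator_of_mem hs _]
      exact (K (t - s)).le_of_opNorm_le (hB _ (mem_Ici.2 (sub_nonneg.2 hs))) _
    · rw [show F t s = 0 from indicator_of_notMem hs _, norm_zero]
      exact mul_nonneg ((norm_nonneg _).trans (hB 0 self_mem_Ici)) (norm_nonneg _)
  · refine Eventually.of_forall fun s => ?_
    have hlim : Tendsto (fun t => K (t - s) (g s)) atTop (𝓝 (L (g s))) :=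
      ((ContinuousLinearMap.apply ℝ W (g s)).continuous.tendsto L).comp
        (hKL.comp (tendsto_atTop_add_const_right _ (-s) tendsto_id))
    refine hlim.congr' ?_
    filter_upwards [eventually_ge_atTop s] with t ht
    exact (indicator_of_mem (mem_Iic.2 ht) (fun s => K (t - s) (g s))).symm

theorem integrableOn_Ioi_of_norm_le_mul_exp {E : Type*} [NormedAddCommGroup E] {g : ℝ → E}
    {C μ : ℝ} (hμ : μ < 0) (hg : ContinuousOn g (Ici 0))
    (hC : ∀ t ∈ Ici 0, ‖g t‖ ≤ C * Real.exp (μ * t)) :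
    IntegrableOn g (Ioi 0) :=
  ((integrableOn_exp_mul_Ioi hμ 0).const_mul C).mono'
    ((hg.mono Ioi_subset_Ici_self).aestronglyMeasurable measurableSet_Ioi)
    ((ae_restrict_iff' measurableSet_Ioi).2
      (Eventually.of_forall fun t ht => hC t (mem_Ici.2 (le_of_lt ht))))

theorem monotoneOn_Ici_of_hasDerivAt_nonneg {f f' : ℝ → ℝ} {a : ℝ}
    (hf : ∀ t ∈ Ici a, HasDerivAt f (f' t) t) (hf' : ∀ t ∈ Ici a, 0 ≤ f' t) :
    MonotoneOn f (Ici a) :=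
  monotoneOn_of_hasDerivWithinAt_nonneg (convex_Ici a)
    (fun t ht => (hf t ht).continuousAt.continuousWithinAt)
    (fun t ht => (hf t (interior_subset ht)).hasDerivWithinAt)
    (fun t ht => hf' t (interior_subset ht))

theorem antitoneOn_Ici_of_hasDerivAt_nonpos {f f' : ℝ → ℝ} {a : ℝ}
    (hf : ∀ t ∈ Ici a, HasDerivAt f (f' t) t) (hf' : ∀ t ∈ Ici a, f' t ≤ 0) :
    AntitoneOn f (Ici a) :=
  antitoneOn_of_hasDerivWithinAt_nonpos (convex_Ici a)
    (fun t ht => (hf t ht).continuousAt.continuousWithinAt)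
    (fun t ht => (hf t (interior_subset ht)).hasDerivWithinAt)
    (fun t ht => hf' t (interior_subset ht))

theorem monotoneOn_mul_exp_of_hasDerivAt {v v' F F' : ℝ → ℝ} {a : ℝ}
    (hv : ∀ t ∈ Ici a, HasDerivAt v (v' t) t) (hF : ∀ t ∈ Ici a, HasDerivAt F (F' t) t)
    (h : ∀ t ∈ Ici a, -(F' t * v t) ≤ v' t) :
    MonotoneOn (fun t => v t * Real.exp (F t)) (Ici a) := by
  refine monotoneOn_Ici_of_hasDerivAt_nonneg
    (fun t ht => (hv t ht).mul ((hF t ht).exp)) fun t ht => ?_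
  have := mul_nonneg (neg_le_iff_add_nonneg.1 (h t ht)) (Real.exp_pos (F t)).le
  linarith

section Vectors

variable {ι : Type*} [Fintype ι]

theorem dotProduct_pos_of_nonneg_of_ne_zero {η x : ι → ℝ} (hη : ∀ i, 0 < η i) (hx : 0 ≤ x)
    (hx0 : x ≠ 0) : 0 < η ⬝ᵥ x := by
  obtain ⟨i, hi⟩ := Function.ne_iff.1 hx0
  exact Finset.sum_pos' (fun j _ => mul_nonneg (hη j).le (hx j))
    ⟨i, Finset.mem_univ i, mul_pos (hη i) ((hx i).lt_of_ne' hi)⟩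

theorem norm_le_dotProduct_mul_norm_inv {η x : ι → ℝ} (hη : ∀ i, 0 < η i) (hx : 0 ≤ x) :
    ‖x‖ ≤ (η ⬝ᵥ x) * ‖η⁻¹‖ := by
  refine (pi_norm_le_iff_of_nonneg (mul_nonneg
    (dotProduct_nonneg_of_nonneg (fun i => (hη i).le) hx) (norm_nonneg _))).2 fun i => ?_
  have hdot : η i * x i ≤ η ⬝ᵥ x :=
    Finset.single_le_sum (f := fun j => η j * x j)
      (fun j _ => mul_nonneg (hη j).le (hx j)) (Finset.mem_univ i)
  have hinv : (η i)⁻¹ ≤ ‖η⁻¹‖ := (le_abs_self _).trans (norm_le_pi_norm η⁻¹ i)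
  calc ‖x i‖ = (η i * x i) * (η i)⁻¹ := by
        rw [Real.norm_of_nonneg (hx i), mul_comm (η i), mul_inv_cancel_right₀ (hη i).ne']
    _ ≤ (η ⬝ᵥ x) * ‖η⁻¹‖ :=
        mul_le_mul hdot hinv (inv_nonneg.2 (hη i).le) ((mul_nonneg (hη i).le (hx i)).trans hdot)

theorem dotProduct_mul_self_le {η x : ι → ℝ} (hη : 0 ≤ η) (hx : 0 ≤ x) :
    η ⬝ᵥ (x * x) ≤ ‖x‖ * (η ⬝ᵥ x) := by
  rw [dotProduct, dotProduct, Finset.mul_sum]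
  refine Finset.sum_le_sum fun i _ => ?_
  have hxi : x i ≤ ‖x‖ := (Real.le_norm_self _).trans (norm_le_pi_norm x i)
  simp only [Pi.mul_apply]
  nlinarith [mul_le_mul_of_nonneg_left hxi (mul_nonneg (hη i) (hx i))]

theorem HasDerivAt.dotProduct_of_vecMul_eq_zero {A : Matrix ι ι ℝ} {η : ι → ℝ}
    (hηA : η ᵥ* A = 0) {y g : ℝ → ι → ℝ} {t : ℝ} (hy : HasDerivAt y (A *ᵥ y t - g t) t) :
    HasDerivAt (fun s => η ⬝ᵥ y s) (-(η ⬝ᵥ g t)) t := by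
  have h := HasDerivAt.fun_sum fun i (_ : i ∈ Finset.univ) =>
    (hasDerivAt_pi.1 hy i).const_mul (η i)
  refine h.congr_deriv ?_
  change η ⬝ᵥ (A *ᵥ y t - g t) = _
  rw [dotProduct_sub, dotProduct_mulVec, hηA, zero_dotProduct, zero_sub]

end Vectors

section RescaledCumulantSystem

variable {ι : Type*} [Fintype ι] {A : Matrix ι ι ℝ} {η : ι → ℝ} {c μ : ℝ} {y : ℝ → ι → ℝ}

theorem hasDerivAt_exp_neg_mul_smul_of_cumulant [DecidableEq ι] {D : Matrix ι ι ℝ} {t : ℝ}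
    {u : ℝ → ι → ℝ} (hu : HasDerivAt u (D *ᵥ u t - (c / 2) • (u t * u t)) t) :
    HasDerivAt (fun s => Real.exp (-(μ * s)) • u s)
      ((D - μ • 1) *ᵥ (Real.exp (-(μ * t)) • u t) - (c / 2 * Real.exp (μ * t)) •
        ((Real.exp (-(μ * t)) • u t) * (Real.exp (-(μ * t)) • u t))) t := by
  have he : HasDerivAt (fun s => Real.exp (-(μ * s))) (-μ * Real.exp (-(μ * t))) t := by
    simpa [mul_comm] using ((hasDerivAt_id t).const_mul μ).neg.exp
  refine (he.smul hu).congr_deriv ?_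
  have hexp : Real.exp (μ * t) * Real.exp (-(μ * t)) = 1 := by rw [← Real.exp_add]; simp
  ext i
  simp only [Pi.add_apply, Pi.sub_apply, Pi.smul_apply, Pi.mul_apply, smul_eq_mul, sub_mulVec,
    mulVec_smul, smul_mulVec, one_mulVec]
  linear_combination (c / 2 * Real.exp (-(μ * t)) * u t i * u t i) * hexp

theorem norm_le_dotProduct_mul_norm_inv_of_hasDerivAt (hη : ∀ i, 0 < η i) (hηA : η ᵥ* A = 0)
    (hc : 0 ≤ c)
    (hy : ∀ t ∈ Ici (0 : ℝ),
      HasDerivAt y (A *ᵥ y t - (c / 2 * Real.exp (μ * t)) • (y t * y t)) t)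
    (hy_nonneg : ∀ t ∈ Ici (0 : ℝ), 0 ≤ y t) {t : ℝ} (ht : t ∈ Ici 0) :
    ‖y t‖ ≤ η ⬝ᵥ y 0 * ‖η⁻¹‖ := by
  have hanti : AntitoneOn (fun s => η ⬝ᵥ y s) (Ici 0) :=
    antitoneOn_Ici_of_hasDerivAt_nonpos (fun s hs => (hy s hs).dotProduct_of_vecMul_eq_zero
      (g := fun r => (c / 2 * Real.exp (μ * r)) • (y r * y r)) hηA) fun s hs => neg_nonpos.2 <| dotProduct_nonneg_of_nonneg (fun i => (hη i).le) <|
        smul_nonneg (by positivity) (mul_nonneg (hy_nonneg s hs) (hy_nonneg s hs))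
  exact (norm_le_dotProduct_mul_norm_inv hη (hy_nonneg t ht)).trans <|
    mul_le_mul_of_nonneg_right (hanti self_mem_Ici ht ht) (norm_nonneg _)

theorem dotProduct_mul_exp_le_of_hasDerivAt (hη : 0 ≤ η) (hηA : η ᵥ* A = 0) {M : ℝ}
    (hc : 0 ≤ c) (hμ : μ < 0)
    (hy : ∀ t ∈ Ici (0 : ℝ),
      HasDerivAt y (A *ᵥ y t - (c / 2 * Real.exp (μ * t)) • (y t * y t)) t)
    (hy_nonneg : ∀ t ∈ Ici (0 : ℝ), 0 ≤ y t) (hM : ∀ t ∈ Ici (0 : ℝ), ‖y t‖ ≤ M)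
    {t : ℝ} (ht : 0 ≤ t) :
    η ⬝ᵥ y 0 * Real.exp (c / 2 * M / μ) ≤ η ⬝ᵥ y t := by
  set ρ := c / 2 * M
  -- integrating factor: `ρ e^{μ r} / μ` is a primitive of the loss rate, with values in `[ρ/μ, 0]`
  have hρ : 0 ≤ ρ := mul_nonneg (by linarith) ((norm_nonneg _).trans (hM 0 self_mem_Ici))
  have hF : ∀ s ∈ Ici (0 : ℝ), HasDerivAt (fun r => ρ * Real.exp (μ * r) / μ)
      (ρ * Real.exp (μ * s)) s := fun s _ => by
    have := (((hasDerivAt_id s).const_mul μ).exp.const_mul ρ).div_const μ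
    exact this.congr_deriv (by rw [mul_one, ← mul_assoc, mul_div_cancel_right₀ _ hμ.ne]; rfl)
  have hloss : ∀ s ∈ Ici (0 : ℝ), -(ρ * Real.exp (μ * s) * (η ⬝ᵥ y s)) ≤
      -(η ⬝ᵥ ((c / 2 * Real.exp (μ * s)) • (y s * y s))) := by
    intro s hs
    rw [neg_le_neg_iff, dotProduct_smul, smul_eq_mul]
    calc c / 2 * Real.exp (μ * s) * (η ⬝ᵥ (y s * y s))
        ≤ c / 2 * Real.exp (μ * s) * (M * (η ⬝ᵥ y s)) := by
          gcongr
          exact (dotProduct_mul_self_le hη (hy_nonneg s hs)).trans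
            (mul_le_mul_of_nonneg_right (hM s hs) (dotProduct_nonneg_of_nonneg hη (hy_nonneg s hs)))
      _ = ρ * Real.exp (μ * s) * (η ⬝ᵥ y s) := by ring
  have hmono := monotoneOn_mul_exp_of_hasDerivAt (fun s hs =>
    (hy s hs).dotProduct_of_vecMul_eq_zero (g := fun r => (c / 2 * Real.exp (μ * r)) • (y r * y r))
      hηA) hF hloss self_mem_Ici ht ht
  have hFt : ρ * Real.exp (μ * t) / μ ≤ 0 :=
    div_nonpos_of_nonneg_of_nonpos (by positivity) hμ.le
  calc η ⬝ᵥ y 0 * Real.exp (c / 2 * M / μ)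
      = η ⬝ᵥ y 0 * Real.exp (ρ * Real.exp (μ * 0) / μ) := by simp [ρ]
    _ ≤ η ⬝ᵥ y t * Real.exp (ρ * Real.exp (μ * t) / μ) := hmono
    _ ≤ η ⬝ᵥ y t := mul_le_of_le_one_right (dotProduct_nonneg_of_nonneg hη (hy_nonneg t ht))
          (Real.exp_le_one_iff.2 hFt)

end RescaledCumulantSystem

section MatrixExponential

open NormedSpace

variable {ι : Type*} [Fintype ι] [DecidableEq ι]

-- Any norm on matrices would do; one is needed only to differentiate `exp`.
attribute [local instance] Matrix.linftyOpNormedAddCommGroup Matrix.linftyOpNormedSpace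
  Matrix.linftyOpNormedRing Matrix.linftyOpNormedAlgebra

namespace Matrix

variable {m n : Type*} [Fintype m] [Fintype n] [DecidableEq n]

noncomputable def mulVecCLM : Matrix m n ℝ →L[ℝ] (n → ℝ) →L[ℝ] m → ℝ :=
  LinearMap.toContinuousLinearMap
    (LinearMap.toContinuousLinearMap.toLinearMap ∘ₗ Matrix.toLin'.toLinearMap)

@[simp]
theorem mulVecCLM_apply (M : Matrix m n ℝ) (v : n → ℝ) : mulVecCLM M v = M *ᵥ v := rfl

theorem exp_smul_mul_exp_smul (A : Matrix ι ι ℝ) (a b : ℝ) :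
    exp (a • A) * exp (b • A) = exp ((a + b) • A) := by
  rw [add_smul, exp_add_of_commute _ _ (((Commute.refl A).smul_left a).smul_right b)]

theorem continuous_exp_smul (A : Matrix ι ι ℝ) : Continuous fun s : ℝ => exp (s • A) :=
  (differentiable_exp_smul_const ℝ A).continuous

end Matrix

theorem hasDerivAt_exp_neg_smul_mulVec {A : Matrix ι ι ℝ} {y g : ℝ → ι → ℝ} {s : ℝ}
    (hy : HasDerivAt y (A *ᵥ y s - g s) s) :
    HasDerivAt (fun r => exp ((-r) • A) *ᵥ y r) (-(exp ((-s) • A) *ᵥ g s)) s := by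
  have hE : HasDerivAt (fun r : ℝ => exp ((-r) • A)) (-(A * exp ((-s) • A))) s :=
    ((hasDerivAt_exp_smul_const' A (-s)).scomp s (hasDerivAt_neg s)).congr_deriv
      (neg_one_smul ℝ _)
  have hE' : HasDerivAt (fun r : ℝ => mulVecCLM (exp ((-r) • A)))
      (mulVecCLM (-(A * exp ((-s) • A)))) s :=
    (mulVecCLM (m := ι) (n := ι)).hasFDerivAt.comp_hasDerivAt s hE
  have hcomm : A * exp ((-s) • A) = exp ((-s) • A) * A :=
    (((Commute.refl A).smul_right _).exp_right).eq
  refine (hE'.clm_apply hy).congr_deriv ?_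
  rw [map_neg, _root_.neg_apply, mulVecCLM_apply, mulVecCLM_apply, hcomm, ← mulVec_mulVec,
    mulVec_sub]
  abel

theorem eq_exp_smul_mulVec_sub_integral_of_hasDerivAt {A : Matrix ι ι ℝ} {y g : ℝ → ι → ℝ}
    (hy : ∀ t ∈ Ici (0 : ℝ), HasDerivAt y (A *ᵥ y t - g t) t) (hg : ContinuousOn g (Ici 0))
    {t : ℝ} (ht : 0 ≤ t) :
    y t = exp (t • A) *ᵥ y 0 - ∫ s in (0 : ℝ)..t, exp ((t - s) • A) *ᵥ g s := by
  have hcont : ContinuousOn (fun s => exp ((-s) • A) *ᵥ g s) (Icc 0 t) :=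
    ((mulVecCLM (m := ι) (n := ι)).continuous.comp ((continuous_exp_smul A).comp
      continuous_neg)).continuousOn.clm_apply (hg.mono Icc_subset_Ici_self)
  have hftc := intervalIntegral.integral_eq_sub_of_hasDerivAt
    (fun s hs => hasDerivAt_exp_neg_smul_mulVec (hy s (by rw [uIcc_of_le ht] at hs; exact hs.1)))
    (hcont.neg.intervalIntegrable_of_Icc ht)
  rw [intervalIntegral.integral_neg, neg_zero, zero_smul, exp_zero, one_mulVec] at hftc
  have hw : exp ((-t) • A) *ᵥ y t = y 0 - ∫ s in (0 : ℝ)..t, exp ((-s) • A) *ᵥ g s := by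
    rw [sub_eq_add_neg, hftc]; abel
  have hint := (mulVecCLM (exp (t • A))).intervalIntegral_comp_comm
    (hcont.intervalIntegrable_of_Icc (μ := volume) ht)
  simp only [mulVecCLM_apply, mulVec_mulVec, exp_smul_mul_exp_smul, ← sub_eq_add_neg] at hint
  calc y t = exp (t • A) *ᵥ (exp ((-t) • A) *ᵥ y t) := by
        rw [mulVec_mulVec, exp_smul_mul_exp_smul, add_neg_cancel, zero_smul, exp_zero, one_mulVec]
    _ = _ := by rw [hw, mulVec_sub, hint]

theorem tendsto_of_hasDerivAt_mulVec_sub {A P : Matrix ι ι ℝ}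
    (hA : Tendsto (fun s : ℝ => exp (s • A)) atTop (𝓝 P)) {y g : ℝ → ι → ℝ}
    (hy : ∀ t ∈ Ici (0 : ℝ), HasDerivAt y (A *ᵥ y t - g t) t) (hgc : ContinuousOn g (Ici 0))
    (hgi : IntegrableOn g (Ioi 0)) :
    Tendsto y atTop (𝓝 (P *ᵥ (y 0 - ∫ s in Ioi 0, g s))) := by
  have hK : Continuous fun r : ℝ => mulVecCLM (exp (r • A)) :=
    mulVecCLM.continuous.comp (continuous_exp_smul A)
  have hKP : Tendsto (fun r : ℝ => mulVecCLM (exp (r • A))) atTop (𝓝 (mulVecCLM P)) :=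
    (mulVecCLM.continuous.tendsto P).comp hA
  have hfree : Tendsto (fun t : ℝ => exp (t • A) *ᵥ y 0) atTop (𝓝 (P *ᵥ y 0)) :=
    ((ContinuousLinearMap.apply ℝ _ (y 0)).continuous.tendsto _).comp hKP
  have hforced := tendsto_intervalIntegral_apply_sub_of_tendsto hK hKP hgi
  rw [mulVec_sub]
  refine (hfree.sub hforced).congr' ?_
  filter_upwards [eventually_ge_atTop 0] with t ht
  exact (eq_exp_smul_mulVec_sub_integral_of_hasDerivAt hy hgc ht).symm

theorem exists_pos_tendsto_smul_of_hasDerivAt {A P : Matrix ι ι ℝ} {ξ η : ι → ℝ}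
    (hη : ∀ i, 0 < η i) (hηA : η ᵥ* A = 0) (hP : P = vecMulVec ξ η) (hξη : η ⬝ᵥ ξ = 1)
    (hA : Tendsto (fun s : ℝ => exp (s • A)) atTop (𝓝 P)) {c μ : ℝ} (hc : 0 ≤ c) (hμ : μ < 0)
    {y : ℝ → ι → ℝ}
    (hy : ∀ t ∈ Ici (0 : ℝ),
      HasDerivAt y (A *ᵥ y t - (c / 2 * Real.exp (μ * t)) • (y t * y t)) t)
    (hy_nonneg : ∀ t ∈ Ici (0 : ℝ), 0 ≤ y t) (hy0 : 0 < η ⬝ᵥ y 0) :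
    ∃ κ : ℝ, 0 < κ ∧ Tendsto y atTop (𝓝 (κ • ξ)) := by
  set g := fun t : ℝ => (c / 2 * Real.exp (μ * t)) • (y t * y t)
  set M := η ⬝ᵥ y 0 * ‖η⁻¹‖
  have hM : ∀ t ∈ Ici (0 : ℝ), ‖y t‖ ≤ M := fun t ht =>
    norm_le_dotProduct_mul_norm_inv_of_hasDerivAt hη hηA hc hy hy_nonneg ht
  have hgc : ContinuousOn g (Ici 0) := fun t ht =>
    ((continuous_const.mul (Real.continuous_exp.comp (continuous_const_mul μ))).continuousAt.smul
      ((hy t ht).continuousAt.mul (hy t ht).continuousAt)).continuousWithinAt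
  have hgi : IntegrableOn g (Ioi 0) := integrableOn_Ioi_of_norm_le_mul_exp (C := c / 2 * M ^ 2)
    hμ hgc fun t ht => by
      rw [norm_smul, Real.norm_of_nonneg (by positivity), sq, mul_right_comm]
      gcongr
      exact (norm_mul_le _ _).trans (mul_self_le_mul_self (norm_nonneg _) (hM t ht))
  have hlim := tendsto_of_hasDerivAt_mulVec_sub hA hy hgc hgi
  rw [hP, vecMulVec_mulVec, op_smul_eq_smul] at hlim
  refine ⟨_, ?_, hlim⟩
  have hmass := (((continuous_const (y := η)).dotProduct continuous_id).tendsto _).comp hlim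
  rw [id, dotProduct_smul, hξη, smul_eq_mul, mul_one] at hmass
  refine (mul_pos hy0 (Real.exp_pos (c / 2 * M / μ))).trans_le (ge_of_tendsto hmass ?_)
  filter_upwards [eventually_ge_atTop 0] with t ht
  exact dotProduct_mul_exp_le_of_hasDerivAt (fun i => (hη i).le) hηA hc hμ hy hy_nonneg hM ht

end MatrixExponential

theorem stmt11_general (k : ℕ) (c : ℝ) (hc : 0 < c)
    (D : Matrix (Fin k) (Fin k) ℝ)
    (μ : ℝ) (hμ : μ < 0)
    (ξ η : Fin k → ℝ) (hηpos : ∀ i, 0 < η i)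
    (hleft : D.vecMul η = μ • η)
    (hnormal : ∑ i, ξ i * η i = 1)
    (P : Matrix (Fin k) (Fin k) ℝ) (hP : ∀ i j, P i j = ξ i * η j)
    (hconv : Tendsto
      (fun s : ℝ => NormedSpace.exp (s • (D - μ • (1 : Matrix (Fin k) (Fin k) ℝ))))
      atTop (𝓝 P))
    (lam : Fin k → ℝ) (hlam : ∀ i, 0 ≤ lam i) (hlam0 : lam ≠ 0)
    (u : ℝ → Fin k → ℝ)
    (husol : ∀ t ∈ Set.Ici (0 : ℝ),
      HasDerivAt u (D.mulVec (u t) - (c / 2) • (u t * u t)) t)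
    (hunonneg : ∀ t ∈ Set.Ici (0 : ℝ), ∀ i : Fin k, 0 ≤ u t i)
    (huinit : u 0 = lam) :
    ∃ κ : ℝ, 0 < κ ∧
      Tendsto (fun t : ℝ => Real.exp (-(μ * t)) • u t) atTop (𝓝 (κ • ξ)) := by
  set A := D - μ • (1 : Matrix (Fin k) (Fin k) ℝ)
  have hηA : η ᵥ* A = 0 := by rw [vecMul_sub, hleft, vecMul_smul, vecMul_one, sub_self]
  have hPξη : P = vecMulVec ξ η := by ext i j; exact hP i j
  have hξη : η ⬝ᵥ ξ = 1 := by rw [dotProduct_comm]; exact hnormal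
  refine exists_pos_tendsto_smul_of_hasDerivAt hηpos hηA hPξη hξη hconv hc.le hμ
    (fun t ht => hasDerivAt_exp_neg_mul_smul_of_cumulant (husol t ht))
    (fun t ht i => smul_nonneg (Real.exp_pos _).le (hunonneg t ht i)) ?_
  simpa [huinit] using dotProduct_pos_of_nonneg_of_ne_zero hηpos hlam hlam0

/-- (From the proof of Theorem 3.5 of the paper.) In the subcritical
irreducible case `μ < 0`, with positive right/left eigenvectors `ξ, η` of `D`,
`(ξ,η) = 1`, `P = ξ ηᵀ` and `e^{(D−μI)s} → P` as `s → ∞`, if `u` is a nonnegative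
solution of the cumulant system with `u_0 = λ ≥ 0`, `λ ≠ 0`, then `e^{−μt} u_t`
converges as `t → ∞` to `κ ξ` for some `κ > 0`. -/
theorem stmt11 (k : ℕ) (hk : 1 ≤ k) (c : ℝ) (hc : 0 < c)
    (D : Matrix (Fin k) (Fin k) ℝ)
    (hMetzler : ∀ i j : Fin k, i ≠ j → 0 ≤ D i j)
    (hirr : ∀ J : Finset (Fin k), J.Nonempty → J ≠ Finset.univ →
      ∃ j ∈ J, ∃ i ∉ J, 0 < D j i)
    (μ : ℝ) (hμ : μ < 0)
    (ξ η : Fin k → ℝ) (hξpos : ∀ i, 0 < ξ i) (hηpos : ∀ i, 0 < η i)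
    (hright : D.mulVec ξ = μ • ξ) (hleft : D.vecMul η = μ • η)
    (hnormal : ∑ i, ξ i * η i = 1)
    (P : Matrix (Fin k) (Fin k) ℝ) (hP : ∀ i j, P i j = ξ i * η j)
    (hconv : Tendsto
      (fun s : ℝ => NormedSpace.exp (s • (D - μ • (1 : Matrix (Fin k) (Fin k) ℝ))))
      atTop (𝓝 P))
    (lam : Fin k → ℝ) (hlam : ∀ i, 0 ≤ lam i) (hlam0 : lam ≠ 0)
    (u : ℝ → Fin k → ℝ)
    (husol : ∀ t ∈ Set.Ici (0 : ℝ),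
      HasDerivAt u (D.mulVec (u t) - (c / 2) • (u t * u t)) t)
    (hunonneg : ∀ t ∈ Set.Ici (0 : ℝ), ∀ i : Fin k, 0 ≤ u t i)
    (huinit : u 0 = lam) :
    ∃ κ : ℝ, 0 < κ ∧
      Tendsto (fun t : ℝ => Real.exp (-(μ * t)) • u t) atTop (𝓝 (κ • ξ)) :=
  stmt11_general k c hc D μ hμ ξ η hηpos hleft hnormal P hP hconv lam hlam hlam0 u husol hunonneg
    huinit
end

section
/- Let μ < 0, c > 0. For a ≥ 0 and t ≥ 0 define u_t(a) = a e^{μ t} / (1 + (c/(2|μ|)) a (1 − e^{μ t})), and for t > 0 define u_t(∞) = (2|μ|/c) e^{μ t} / (1 − e^{μ t}). Then for every x > 0, θ > 0 and λ ≥ 0: lim_{t→∞} [ e^{−x u_t(λ)} − e^{−x u_t(λ + u_θ(∞))} ] / [ 1 − e^{−x u_{t+θ}(∞)} ] = 1/(1 + (c/(2|μ|)) λ) · 1/(1 + (c/(2|μ|)) (1 − e^{μ θ}) λ). -/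
open Filter Topology

lemma phi_tendsto : Tendsto (fun y : ℝ => (1 - Real.exp (-y)) / y) (𝓝[≠] (0:ℝ)) (𝓝 1) := by
  have h : HasDerivAt (fun y : ℝ => 1 - Real.exp (-y)) 1 0 := by
    have h1 : HasDerivAt (fun y : ℝ => Real.exp (-y)) (Real.exp (-(0:ℝ)) * (-1)) 0 :=
      (hasDerivAt_neg (0:ℝ)).exp
    have h2 := h1.const_sub 1
    simpa using h2
  have := hasDerivAt_iff_tendsto_slope.mp h
  refine this.congr fun y => ?_
  simp [slope_def_field]


set_option maxHeartbeats 1000000 in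
/-- (Key limit in the proof of Proposition 3.3 of the paper.) With
`u_t(a) = a e^{μt} / (1 + (c/(2|μ|)) a (1 − e^{μt}))` and
`u_t(∞) = (2|μ|/c) e^{μt}/(1 − e^{μt})`, for every `x > 0`, `θ > 0`, `λ ≥ 0`:
`lim_{t→∞} [e^{−x u_t(λ)} − e^{−x u_t(λ + u_θ(∞))}] / [1 − e^{−x u_{t+θ}(∞)}]
 = (1 + (c/(2|μ|)) λ)⁻¹ · (1 + (c/(2|μ|)) (1 − e^{μθ}) λ)⁻¹`. -/
theorem stmt15 (μ c : ℝ) (hμ : μ < 0) (hc : 0 < c)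
    (u : ℝ → ℝ → ℝ)
    (hu : ∀ t a, u t a = a * Real.exp (μ * t) /
      (1 + c / (2 * |μ|) * a * (1 - Real.exp (μ * t))))
    (uinf : ℝ → ℝ)
    (huinf : ∀ t, uinf t = 2 * |μ| / c * Real.exp (μ * t) / (1 - Real.exp (μ * t)))
    (x θ lam : ℝ) (hx : 0 < x) (hθ : 0 < θ) (hlam : 0 ≤ lam) :
    Tendsto
      (fun t : ℝ =>
        (Real.exp (-(x * u t lam)) - Real.exp (-(x * u t (lam + uinf θ)))) /
          (1 - Real.exp (-(x * uinf (t + θ)))))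
      atTop
      (𝓝 (1 / (1 + c / (2 * |μ|) * lam) *
        (1 / (1 + c / (2 * |μ|) * (1 - Real.exp (μ * θ)) * lam)))) := by
  have hμ' : 0 < -μ := neg_pos.mpr hμ
  have habs : |μ| = -μ := abs_of_neg hμ
  have h2μ : (0:ℝ) < 2 * |μ| := by rw [habs]; linarith
  set k := c / (2 * |μ|) with hkdef
  have hk : 0 < k := div_pos hc h2μ
  have hki : 2 * |μ| / c = 1 / k := by rw [hkdef]; field_simp
  set q := Real.exp (μ * θ) with hqdef
  have hq0 : 0 < q := Real.exp_pos _
  have hq1 : q < 1 := by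
    rw [hqdef]
    have h1 : μ * θ < 0 := mul_neg_of_neg_of_pos hμ hθ
    exact Real.exp_lt_one_iff.mpr h1
  have h1q : (0:ℝ) < 1 - q := sub_pos.mpr hq1
  have huθval : uinf θ = 1 / k * (q / (1 - q)) := by
    rw [huinf θ, hki, ← hqdef]; ring
  have huθpos : 0 < uinf θ := by
    rw [huθval]; positivity
  set lam2 := lam + uinf θ with hlam2
  have hlam2pos : 0 < lam2 := by rw [hlam2]; linarith
  have hsub : lam2 - lam = uinf θ := by rw [hlam2]; ring
  -- E → 0
  have hE : Tendsto (fun t : ℝ => Real.exp (μ * t)) atTop (𝓝 0) := by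
    apply Real.tendsto_exp_atBot.comp
    have h1 : Tendsto (fun t : ℝ => -μ * t) atTop atTop :=
      Tendsto.const_mul_atTop hμ' tendsto_id
    have h2 := tendsto_neg_atTop_atBot.comp h1
    refine Tendsto.congr (fun t => ?_) h2
    simp [Function.comp, neg_mul]
  -- u t a → 0 for a ≥ 0
  have key : ∀ a : ℝ, 0 ≤ a → Tendsto (fun t => x * u t a) atTop (𝓝 0) := by
    intro a ha
    have hne : (1 : ℝ) + k * a * (1 - 0) ≠ 0 := by
      have : 0 ≤ k * a := mul_nonneg hk.le ha
      simp only [sub_zero, mul_one]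
      linarith
    have hcont : ContinuousAt (fun e : ℝ => x * (a * e / (1 + k * a * (1 - e)))) 0 := by
      apply ContinuousAt.mul continuousAt_const
      exact ContinuousAt.div (by fun_prop) (by fun_prop) hne
    have h1 := hcont.tendsto.comp hE
    have h2 : ∀ t : ℝ, x * u t a = x * (a * Real.exp (μ * t) /
        (1 + k * a * (1 - Real.exp (μ * t)))) := fun t => by rw [hu t a]
    refine Tendsto.congr (fun t => (h2 t).symm) ?_
    simpa [Function.comp_def] using h1
  -- the main per-t facts
  have main : ∀ t : ℝ, 0 ≤ t →
      (0 < x * u t lam2 - x * u t lam) ∧ (0 < x * uinf (t + θ)) ∧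
      ((x * u t lam2 - x * u t lam) / (x * uinf (t + θ)) =
        (1 - Real.exp (μ * t) * q) /
          ((1 - q) * (1 + k * lam * (1 - Real.exp (μ * t))) *
            (1 + k * lam2 * (1 - Real.exp (μ * t))))) ∧
      ((Real.exp (-(x * u t lam)) - Real.exp (-(x * u t lam2))) /
          (1 - Real.exp (-(x * uinf (t + θ)))) =
        Real.exp (-(x * u t lam)) *
          ((1 - Real.exp (-(x * u t lam2 - x * u t lam))) / (x * u t lam2 - x * u t lam)) *
          ((x * u t lam2 - x * u t lam) / (x * uinf (t + θ))) *
          ((x * uinf (t + θ)) / (1 - Real.exp (-(x * uinf (t + θ)))))) := by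
    intro t ht
    have hE0 : 0 < Real.exp (μ * t) := Real.exp_pos _
    have hE1 : Real.exp (μ * t) ≤ 1 :=
      Real.exp_le_one_iff.mpr (mul_nonpos_of_nonpos_of_nonneg hμ.le ht)
    set E := Real.exp (μ * t) with hEdef
    have h1E : 0 ≤ 1 - E := by linarith
    have hD1 : 0 < 1 + k * lam * (1 - E) := by
      have : 0 ≤ k * lam * (1 - E) := mul_nonneg (mul_nonneg hk.le hlam) h1E
      linarith
    have hD2 : 0 < 1 + k * lam2 * (1 - E) := by
      have : 0 ≤ k * lam2 * (1 - E) := mul_nonneg (mul_nonneg hk.le hlam2pos.le) h1E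
      linarith
    have hEq : Real.exp (μ * (t + θ)) = E * q := by
      rw [mul_add, Real.exp_add, ← hEdef, ← hqdef]
    have hEq1 : E * q < 1 := by nlinarith
    have hEq0 : 0 < E * q := mul_pos hE0 hq0
    have hHval : x * uinf (t + θ) = x * (1 / k) * (E * q) / (1 - E * q) := by
      rw [huinf (t + θ), hEq, hki]; ring
    have hHpos : 0 < x * uinf (t + θ) := by
      rw [hHval]
      exact div_pos (by positivity) (by linarith)
    have hDval : x * u t lam2 - x * u t lam =
        x * E * (lam2 - lam) / ((1 + k * lam * (1 - E)) * (1 + k * lam2 * (1 - E))) := by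
      rw [hu t lam, hu t lam2, ← hEdef]
      field_simp
      ring
    have hDpos : 0 < x * u t lam2 - x * u t lam := by
      rw [hDval, hsub]
      exact div_pos (mul_pos (mul_pos hx hE0) huθpos) (mul_pos hD1 hD2)
    refine ⟨hDpos, hHpos, ?_, ?_⟩
    · rw [hDval, hsub, huθval, hHval]
      have h1 : (1 : ℝ) - E * q ≠ 0 := by linarith
      field_simp
    · have hexp : Real.exp (-(x * u t lam2)) =
          Real.exp (-(x * u t lam)) * Real.exp (-(x * u t lam2 - x * u t lam)) := by
        rw [← Real.exp_add]; ring_nf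
      have h1mH : 0 < 1 - Real.exp (-(x * uinf (t + θ))) := by
        have := Real.exp_lt_one_iff.mpr (neg_neg_iff_pos.mpr hHpos)
        linarith
      rw [hexp]
      rw [mul_assoc _ (_ / _) (_ / _), div_mul_div_cancel₀ hHpos.ne', mul_assoc,
        div_mul_div_cancel₀ hDpos.ne']
      ring
  -- factor A: exp(-F) → 1
  have tA : Tendsto (fun t => Real.exp (-(x * u t lam))) atTop (𝓝 1) := by
    have h := (key lam hlam).neg
    have h2 := (Real.continuous_exp.tendsto (-0 : ℝ)).comp h
    simpa [Function.comp_def] using h2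
  -- D → 0 within ≠ 0
  have hDD : Tendsto (fun t => x * u t lam2 - x * u t lam) atTop (𝓝 0) := by
    simpa using (key lam2 hlam2pos.le).sub (key lam hlam)
  have hDD' : Tendsto (fun t => x * u t lam2 - x * u t lam) atTop (𝓝[≠] 0) := by
    refine tendsto_nhdsWithin_of_tendsto_nhds_of_eventually_within _ hDD ?_
    filter_upwards [eventually_ge_atTop (0:ℝ)] with t ht
    exact (main t ht).1.ne'
  have tB : Tendsto (fun t => (1 - Real.exp (-(x * u t lam2 - x * u t lam))) /
      (x * u t lam2 - x * u t lam)) atTop (𝓝 1) := phi_tendsto.comp hDD'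
  -- H → 0 within ≠ 0
  have hHall : ∀ t : ℝ, x * uinf (t + θ) =
      x * (1 / k) * (Real.exp (μ * t) * q) / (1 - Real.exp (μ * t) * q) := by
    intro t
    rw [huinf (t + θ), mul_add, Real.exp_add, ← hqdef, hki]; ring
  have tH0 : Tendsto (fun t => x * uinf (t + θ)) atTop (𝓝 0) := by
    have hne : (1 : ℝ) - 0 * q ≠ 0 := by norm_num
    have hcont : ContinuousAt (fun e : ℝ => x * (1 / k) * (e * q) / (1 - e * q)) 0 :=
      ContinuousAt.div (by fun_prop) (by fun_prop) hne
    have h1 := hcont.tendsto.comp hE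
    refine Tendsto.congr (fun t => (hHall t).symm) ?_
    simpa [Function.comp_def] using h1
  have hH' : Tendsto (fun t => x * uinf (t + θ)) atTop (𝓝[≠] 0) := by
    refine tendsto_nhdsWithin_of_tendsto_nhds_of_eventually_within _ tH0 ?_
    filter_upwards [eventually_ge_atTop (0:ℝ)] with t ht
    exact (main t ht).2.1.ne'
  have tD : Tendsto (fun t => (x * uinf (t + θ)) / (1 - Real.exp (-(x * uinf (t + θ)))))
      atTop (𝓝 1) := by
    have h := (phi_tendsto.comp hH').inv₀ one_ne_zero
    rw [inv_one] at h
    exact h.congr fun t => inv_div _ _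
  -- factor C
  have hp1 : (0:ℝ) < 1 + k * lam := by positivity
  have hp2 : (0:ℝ) < 1 + k * lam2 := by positivity
  have tC : Tendsto (fun t => (x * u t lam2 - x * u t lam) / (x * uinf (t + θ))) atTop
      (𝓝 (1 / ((1 - q) * (1 + k * lam) * (1 + k * lam2)))) := by
    have hne : ((1 - q) * (1 + k * lam * (1 - 0)) * (1 + k * lam2 * (1 - 0)) : ℝ) ≠ 0 := by
      simp only [sub_zero, mul_one]
      positivity
    have hcont : ContinuousAt (fun e : ℝ => (1 - e * q) /
        ((1 - q) * (1 + k * lam * (1 - e)) * (1 + k * lam2 * (1 - e)))) 0 :=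
      ContinuousAt.div (by fun_prop) (by fun_prop) hne
    have h1 := hcont.tendsto.comp hE
    refine Tendsto.congr' ?_ (by simpa using h1)
    filter_upwards [eventually_ge_atTop (0:ℝ)] with t ht
    exact ((main t ht).2.2.1).symm
  -- combine
  have hprod := ((tA.mul tB).mul tC).mul tD
  have hden : ((1 - q) * (1 + k * lam) * (1 + k * lam2) : ℝ) =
      (1 + k * lam) * (1 + k * (1 - q) * lam) := by
    rw [hlam2, huθval]
    field_simp
    ring
  have hval : (1 * 1 * (1 / ((1 - q) * (1 + k * lam) * (1 + k * lam2))) * 1 : ℝ) =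
      1 / (1 + k * lam) * (1 / (1 + k * (1 - q) * lam)) := by
    rw [one_mul, one_mul, mul_one, hden, div_mul_div_comm, one_mul]
  rw [hval] at hprod
  refine hprod.congr' ?_
  filter_upwards [eventually_ge_atTop (0:ℝ)] with t ht
  exact ((main t ht).2.2.2).symm
end

section
/- Let α > 0, c > 0 and λ₂ > 0. Define u₂(t) = λ₂ / (1 + (c/2) λ₂ t) and v₂(t) = 1 / (2 (1 + (c/2) λ₂ t)²). Let u₁ : [0,∞) → ℝ be continuous with u₁(t) ≥ 0 for all t, and let v₁ : [0,∞) → ℝ be differentiable with v₁(0) = 1/2 and v₁'(t) = −α v₁(t) + α v₂(t) − c u₁(t) v₁(t) for all t ≥ 0. Then for all t ≥ 0: v₁(t) ≤ e^{−α t}/2 + e^{−α t/2}/2 + α / (c λ₂ (1 + (c/4) λ₂ t)). In particular v₁(t) → 0 as t → ∞. -/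
/-!
With the integrating factor `A t = ∫₀ᵗ (α + c u₁)`, Duhamel's formula reads
`v₁ t = e^{-A t}/2 + ∫₀ᵗ e^{A s - A t} α v₂ s ds`. Since `A` grows at rate at least `α`
and `v₂ ≥ 0`, this shows `v₁ ≥ 0` and lets us replace `e^{A s - A t}` by `e^{-α (t - s)}`.
Splitting the resulting convolution at `t/2`, the first half is exponentially small
(as `v₂ ≤ 1/2`), and the second half is at most
`α ∫_{t/2}^∞ v₂ = α / (c λ₂ (1 + c λ₂ t / 4))`.
-/

open Filter Topology Real Set intervalIntegral

section LinearODE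

variable {A a f y : ℝ → ℝ}

theorem eq_exp_mul_add_integral_of_hasDerivAt (hA : ∀ t, HasDerivAt A (a t) t)
    (hf : ContinuousOn f (Ici 0)) (hy : ∀ t ≥ 0, HasDerivAt y (-(a t * y t) + f t) t)
    {t : ℝ} (ht : 0 ≤ t) :
    y t = exp (A 0 - A t) * y 0 + ∫ s in 0..t, exp (A s - A t) * f s := by
  have hAc : Continuous A := continuous_iff_continuousAt.2 fun t => (hA t).continuousAt
  have hderiv : ∀ s ∈ uIcc 0 t,
      HasDerivAt (fun x => y x * exp (A x)) (f s * exp (A s)) s := by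
    intro s hs
    rw [uIcc_of_le ht] at hs
    exact ((hy s hs.1).mul (hA s).exp).congr_deriv (by ring)
  have hint : IntervalIntegrable (fun s => f s * exp (A s)) MeasureTheory.volume 0 t :=
    ((hf.mono Icc_subset_Ici_self).mul hAc.rexp.continuousOn).intervalIntegrable_of_Icc ht
  have hpull : ∫ s in 0..t, exp (A s - A t) * f s =
      exp (-A t) * ∫ s in 0..t, f s * exp (A s) := by
    rw [← integral_const_mul]
    congr 1 with s
    rw [sub_eq_neg_add, exp_add]
    ring
  rw [hpull, integral_eq_sub_of_hasDerivAt hderiv hint, sub_eq_neg_add, exp_add, exp_neg]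
  field_simp
  ring

theorem nonneg_of_hasDerivAt_linear (hA : ∀ t, HasDerivAt A (a t) t)
    (hf : ContinuousOn f (Ici 0)) (hf0 : ∀ s ≥ 0, 0 ≤ f s)
    (hy : ∀ t ≥ 0, HasDerivAt y (-(a t * y t) + f t) t) (hy0 : 0 ≤ y 0)
    {t : ℝ} (ht : 0 ≤ t) :
    0 ≤ y t := by
  rw [eq_exp_mul_add_integral_of_hasDerivAt hA hf hy ht]
  have : 0 ≤ ∫ s in 0..t, exp (A s - A t) * f s :=
    integral_nonneg ht fun s hs => mul_nonneg (exp_pos _).le (hf0 s hs.1)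
  positivity

theorem le_exp_mul_add_integral_of_hasDerivAt {α : ℝ} (hA : ∀ t, HasDerivAt A (a t) t)
    (haα : ∀ t, α ≤ a t) (hf : ContinuousOn f (Ici 0)) (hf0 : ∀ s ≥ 0, 0 ≤ f s)
    (hy : ∀ t ≥ 0, HasDerivAt y (-(a t * y t) + f t) t) (hy0 : 0 ≤ y 0)
    {t : ℝ} (ht : 0 ≤ t) :
    y t ≤ exp (-(α * t)) * y 0 + ∫ s in 0..t, exp (-(α * (t - s))) * f s := by
  have hAc : Continuous A := continuous_iff_continuousAt.2 fun t => (hA t).continuousAt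
  have hdecay : ∀ s ≤ t, exp (A s - A t) ≤ exp (-(α * (t - s))) := fun s hs => by
    have := mul_sub_le_image_sub_of_le_deriv (fun x => (hA x).differentiableAt)
      (fun x => (hA x).deriv ▸ haα x) hs
    exact exp_le_exp.2 (by linarith)
  have hfI : ContinuousOn f (Icc 0 t) := hf.mono Icc_subset_Ici_self
  rw [eq_exp_mul_add_integral_of_hasDerivAt hA hf hy ht]
  gcongr ?_ * _ + ?_
  · simpa using hdecay 0 ht
  · refine integral_mono_on ht ?_ ?_ fun s hs =>
      mul_le_mul_of_nonneg_right (hdecay s hs.2) (hf0 s hs.1)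
    · exact ((hAc.sub continuous_const).rexp.continuousOn.mul hfI).intervalIntegrable_of_Icc
        ht
    · exact ((by fun_prop : Continuous fun s => exp (-(α * (t - s)))).continuousOn.mul
        hfI).intervalIntegrable_of_Icc ht

end LinearODE

theorem integral_exp_neg_mul_sub {α : ℝ} (hα : α ≠ 0) (t a b : ℝ) :
    ∫ s in a..b, exp (-(α * (t - s))) =
      (exp (-(α * (t - b))) - exp (-(α * (t - a)))) / α := by
  have hderiv : ∀ s ∈ uIcc a b,
      HasDerivAt (fun x => exp (-(α * (t - x))) / α) (exp (-(α * (t - s)))) s :=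
    fun s _ =>
    ((((hasDerivAt_id' s).const_sub t).const_mul α).fun_neg.exp.div_const α).congr_deriv
      (by field_simp)
  rw [integral_eq_sub_of_hasDerivAt hderiv ((by fun_prop : Continuous fun s =>
    exp (-(α * (t - s)))).intervalIntegrable a b), sub_div]

theorem integral_inv_two_mul_one_add_mul_sq {κ a b : ℝ} (hκ : 0 < κ) (ha : 0 ≤ a)
    (hab : a ≤ b) :
    ∫ s in a..b, 1 / (2 * (1 + κ * s) ^ 2) =
      (1 / (1 + κ * a) - 1 / (1 + κ * b)) / (2 * κ) := by
  have hpos : ∀ s ∈ uIcc a b, 0 < 1 + κ * s := fun s hs => by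
    rw [uIcc_of_le hab] at hs
    have : 0 ≤ κ * s := mul_nonneg hκ.le (ha.trans hs.1)
    linarith
  have hderiv : ∀ s ∈ uIcc a b,
      HasDerivAt (fun x => -(1 + κ * x)⁻¹ / (2 * κ)) (1 / (2 * (1 + κ * s) ^ 2)) s :=
    fun s hs =>
    (((((hasDerivAt_id' s).const_mul κ).const_add 1).fun_inv (hpos s hs).ne').fun_neg.div_const
      (2 * κ)).congr_deriv (by field_simp)
  have hcont : ContinuousOn (fun s => 1 / (2 * (1 + κ * s) ^ 2)) (uIcc a b) :=
    continuousOn_const.div (by fun_prop) fun s hs => by have := hpos s hs; positivity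
  rw [integral_eq_sub_of_hasDerivAt hderiv hcont.intervalIntegrable]
  ring

theorem integral_exp_neg_mul_sub_mul_inv_sq_le {α κ t : ℝ} (hα : 0 < α) (hκ : 0 < κ)
    (ht : 0 ≤ t) :
    ∫ s in 0..t, exp (-(α * (t - s))) * (α * (1 / (2 * (1 + κ * s) ^ 2))) ≤
      exp (-(α * t / 2)) / 2 + α / (2 * κ * (1 + κ * t / 2)) := by
  have hpos : ∀ s ≥ 0, 1 ≤ 1 + κ * s := fun s hs => le_add_of_nonneg_right (by positivity)
  have hv_le : ∀ s ≥ 0, 1 / (2 * (1 + κ * s) ^ 2) ≤ 1 / 2 := fun s hs =>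
    one_div_le_one_div_of_le two_pos
      (le_mul_of_one_le_right zero_le_two (one_le_pow₀ (hpos s hs)))
  have hcont : ContinuousOn (fun s => 1 / (2 * (1 + κ * s) ^ 2)) (Ici 0) :=
    continuousOn_const.div (by fun_prop) fun s hs => by have := hpos s hs; positivity
  have hcontIcc : ∀ {a b}, 0 ≤ a → ContinuousOn (fun s => α * (1 / (2 * (1 + κ * s) ^ 2)))
      (Icc a b) := fun ha => continuousOn_const.mul (hcont.mono fun _ hs => ha.trans hs.1)
  have hint : ∀ a b, 0 ≤ a → a ≤ b → IntervalIntegrable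
      (fun s => exp (-(α * (t - s))) * (α * (1 / (2 * (1 + κ * s) ^ 2))))
      MeasureTheory.volume a b := fun a b ha hab =>
    ((by fun_prop : Continuous fun s => exp (-(α * (t - s)))).continuousOn.mul
      (hcontIcc ha)).intervalIntegrable_of_Icc hab
  have ht2 : 0 ≤ t / 2 := by positivity
  have ht2t : t / 2 ≤ t := by linarith
  rw [← integral_add_adjacent_intervals (hint 0 (t / 2) le_rfl ht2) (hint (t / 2) t ht2 ht2t)]
  gcongr ?_ + ?_
  · calc ∫ s in 0..t / 2, exp (-(α * (t - s))) * (α * (1 / (2 * (1 + κ * s) ^ 2)))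
        ≤ ∫ s in 0..t / 2, α / 2 * exp (-(α * (t - s))) := by
          refine integral_mono_on ht2 (hint 0 (t / 2) le_rfl ht2)
            ((by fun_prop : Continuous fun s => α / 2 * exp (-(α * (t - s)))).intervalIntegrable
              _ _)
            fun s hs => ?_
          have := mul_le_mul_of_nonneg_left (hv_le s hs.1) hα.le
          rw [mul_comm (α / 2)]
          gcongr
          linarith
      _ = (exp (-(α * t / 2)) - exp (-(α * t))) / 2 := by
          rw [integral_const_mul, integral_exp_neg_mul_sub hα.ne']
          field_simp
          ring_nf
      _ ≤ exp (-(α * t / 2)) / 2 := by linarith [exp_pos (-(α * t))]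
  · calc ∫ s in t / 2..t, exp (-(α * (t - s))) * (α * (1 / (2 * (1 + κ * s) ^ 2)))
        ≤ ∫ s in t / 2..t, α * (1 / (2 * (1 + κ * s) ^ 2)) := by
          refine integral_mono_on ht2t (hint _ _ ht2 ht2t)
            ((hcontIcc ht2).intervalIntegrable_of_Icc ht2t) fun s hs => ?_
          refine mul_le_of_le_one_left (by have := hpos s (ht2.trans hs.1); positivity) ?_
          exact exp_le_one_iff.2 (by nlinarith [hs.2])
      _ = α / (2 * κ) * (1 / (1 + κ * t / 2) - 1 / (1 + κ * t)) := by
          rw [integral_const_mul, integral_inv_two_mul_one_add_mul_sq hκ ht2 ht2t]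
          ring_nf
      _ ≤ α / (2 * κ) * (1 / (1 + κ * t / 2)) := by
          gcongr
          exact sub_le_self _ (by positivity)
      _ = α / (2 * κ * (1 + κ * t / 2)) := by rw [mul_one_div, div_div]

theorem tendsto_exp_add_exp_add_div_atTop {α β γ : ℝ} (hα : 0 < α) (hβ : 0 < β)
    (hγ : 0 < γ) :
    Tendsto (fun t => exp (-(α * t)) / 2 + exp (-(α * t / 2)) / 2 + α / (β * (1 + γ * t)))
      atTop (𝓝 0) := by
  have hexp : ∀ {k : ℝ}, 0 < k → Tendsto (fun t => exp (-(k * t)) / 2) atTop (𝓝 0) :=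
    fun hk => by simpa using (tendsto_exp_atBot.comp
      (tendsto_neg_atTop_atBot.comp (tendsto_id.const_mul_atTop hk))).div_const 2
  have hdiv : Tendsto (fun t => α / (β * (1 + γ * t))) atTop (𝓝 0) :=
    tendsto_const_nhds.div_atTop <| (tendsto_atTop_add_const_left _ 1
      (tendsto_id.const_mul_atTop hγ)).const_mul_atTop hβ
  convert ((hexp hα).add (hexp (half_pos hα))).add hdiv using 5
  · rw [mul_div_right_comm]
  · simp

theorem stmt17_general (α c lam₂ : ℝ) (hα : 0 < α) (hc : 0 < c) (hlam₂ : 0 < lam₂)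
    (v₂ : ℝ → ℝ)
    (hv₂ : ∀ t, v₂ t = 1 / (2 * (1 + c / 2 * lam₂ * t) ^ 2))
    (u₁ : ℝ → ℝ) (hu₁cont : Continuous u₁) (hu₁pos : ∀ t, 0 ≤ u₁ t)
    (v₁ : ℝ → ℝ) (hv₁0 : v₁ 0 = 1 / 2)
    (hv₁ : ∀ t ≥ (0 : ℝ),
      HasDerivAt v₁ (-(α * v₁ t) + α * v₂ t - c * u₁ t * v₁ t) t) :
    (∀ t ≥ (0 : ℝ),
      v₁ t ≤ Real.exp (-(α * t)) / 2 + Real.exp (-(α * t / 2)) / 2 +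
        α / (c * lam₂ * (1 + c / 4 * lam₂ * t))) ∧
    Tendsto v₁ atTop (𝓝 0) := by
  obtain rfl : v₂ = fun t => 1 / (2 * (1 + c / 2 * lam₂ * t) ^ 2) := funext hv₂
  have hκ : 0 < c / 2 * lam₂ := by positivity
  have hA : ∀ t, HasDerivAt (fun t => ∫ s in 0..t, (α + c * u₁ s)) (α + c * u₁ t) t :=
    fun t => ((by fun_prop : Continuous fun s => α + c * u₁ s).integral_hasStrictDerivAt
      0 t).hasDerivAt
  have haα : ∀ t, α ≤ α + c * u₁ t := fun t =>
    le_add_of_nonneg_right (mul_nonneg hc.le (hu₁pos t))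
  have hf : ContinuousOn (fun t => α * (1 / (2 * (1 + c / 2 * lam₂ * t) ^ 2))) (Ici 0) :=
    continuousOn_const.mul <| continuousOn_const.div (by fun_prop) fun t (ht : 0 ≤ t) => by
      positivity
  have hf0 : ∀ t ≥ 0, 0 ≤ α * (1 / (2 * (1 + c / 2 * lam₂ * t) ^ 2)) := fun t _ => by
    positivity
  have hy : ∀ t ≥ 0, HasDerivAt v₁
      (-((α + c * u₁ t) * v₁ t) + α * (1 / (2 * (1 + c / 2 * lam₂ * t) ^ 2))) t :=
    fun t ht => (hv₁ t ht).congr_deriv (by ring)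
  have hy0 : 0 ≤ v₁ 0 := by norm_num [hv₁0]
  have hbound : ∀ t ≥ (0 : ℝ), v₁ t ≤ exp (-(α * t)) / 2 + exp (-(α * t / 2)) / 2 +
      α / (c * lam₂ * (1 + c / 4 * lam₂ * t)) := fun t ht =>
    calc v₁ t ≤ exp (-(α * t)) * v₁ 0 + _ :=
          le_exp_mul_add_integral_of_hasDerivAt hA haα hf hf0 hy hy0 ht
      _ ≤ exp (-(α * t)) * v₁ 0 + (exp (-(α * t / 2)) / 2 +
          α / (2 * (c / 2 * lam₂) * (1 + c / 2 * lam₂ * t / 2))) := by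
        gcongr
        exact integral_exp_neg_mul_sub_mul_inv_sq_le hα hκ ht
      _ = _ := by rw [hv₁0]; ring
  refine ⟨hbound, tendsto_of_tendsto_of_tendsto_of_le_of_le' tendsto_const_nhds
    (tendsto_exp_add_exp_add_div_atTop hα (mul_pos hc hlam₂)
      (by positivity : 0 < c / 4 * lam₂)) ?_ ?_⟩
  · filter_upwards [eventually_ge_atTop 0] with t ht
    exact nonneg_of_hasDerivAt_linear hA hf hf0 hy hy0 ht
  · filter_upwards [eventually_ge_atTop 0] with t ht
    exact hbound t ht

/-- (From the proof of Proposition 4.3 (c) of the paper.) For the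
two-type critical model with mutation matrix `[[−α, α], [0, 0]]`: with
`u₂(t) = λ₂/(1 + (c/2)λ₂ t)`, `v₂(t) = 1/(2(1 + (c/2)λ₂ t)²)`, any `u₁ ≥ 0`
continuous and `v₁` solving `v₁' = −α v₁ + α v₂ − c u₁ v₁`, `v₁(0) = 1/2`, satisfies
`v₁(t) ≤ e^{−αt}/2 + e^{−αt/2}/2 + α/(cλ₂(1 + (c/4)λ₂ t))`; in particular
`v₁(t) → 0` as `t → ∞`. -/
theorem stmt17 (α c lam₂ : ℝ) (hα : 0 < α) (hc : 0 < c) (hlam₂ : 0 < lam₂)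
    (u₂ v₂ : ℝ → ℝ)
    (hu₂ : ∀ t, u₂ t = lam₂ / (1 + c / 2 * lam₂ * t))
    (hv₂ : ∀ t, v₂ t = 1 / (2 * (1 + c / 2 * lam₂ * t) ^ 2))
    (u₁ : ℝ → ℝ) (hu₁cont : Continuous u₁) (hu₁pos : ∀ t, 0 ≤ u₁ t)
    (v₁ : ℝ → ℝ) (hv₁0 : v₁ 0 = 1 / 2)
    (hv₁ : ∀ t ≥ (0 : ℝ),
      HasDerivAt v₁ (-(α * v₁ t) + α * v₂ t - c * u₁ t * v₁ t) t) :
    (∀ t ≥ (0 : ℝ),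
      v₁ t ≤ Real.exp (-(α * t)) / 2 + Real.exp (-(α * t / 2)) / 2 +
        α / (c * lam₂ * (1 + c / 4 * lam₂ * t))) ∧
    Tendsto v₁ atTop (𝓝 0) :=
  stmt17_general α c lam₂ hα hc hlam₂ v₂ hv₂ u₁ hu₁cont hu₁pos v₁ hv₁0 hv₁
end

section
/- Let 0 < α < β and c > 0. For λ₂ ∈ [0,∞) define the forcing term g_{λ₂}(t) = α λ₂ e^{−β t} / (1 + (c/(2β)) λ₂ (1 − e^{−β t})), and define g_∞(t) = (2αβ/c) e^{−β t} / (1 − e^{−β t}) for t > 0. Let y : (0,∞) → ℝ be differentiable with y(t) ≥ 0 for all t > 0 and y'(t) = −α y(t) − (c/2) y(t)² + g(t) on (0,∞), where g = g_{λ₂} for some λ₂ ∈ [0,∞) or g = g_∞. Then the limit C := lim_{t→∞} e^{α t} y(t) exists and is finite. Moreover there exist constants 0 < m ≤ M < ∞, depending only on α, β and c, such that for every λ₂ ∈ [1,∞) and every such nonnegative solution y (with g = g_{λ₂} or g = g_∞), one has m ≤ lim_{t→∞} e^{α t} y(t) ≤ M. -/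
open Filter Topology Set Real

/-!
With `z(t) = e^{αt} y(t)` the equation reads `z' = e^{αt} g - (c/2) e^{-αt} z²`. Every admissible
forcing satisfies `g(t) ≤ G e^{-βt}` for `t ≥ 1`, so `z + G/(β-α) e^{-(β-α)t}` is nonincreasing and
nonnegative, hence convergent, and so is `z`. The quadratic damping bounds `y(2)` independently of
the behaviour of `y` near `0` (comparison with a barrier exploding at `t = 1`), which bounds `z` on
`[2, ∞)` by a constant `B`. For `λ₂ ≥ 1` the forcing is at least `a e^{-βt}`; once `z ≤ B`, the loss
`(c/2) e^{-αt} z²` is at most `(cB/2) e^{-αt} z`, an integrable rate, so the forcing keeps `z` above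
a positive constant.
-/

lemma monotoneOn_add_div_mul_exp_of_le_deriv {f f' : ℝ → ℝ} {t₀ G γ : ℝ} (hγ : γ ≠ 0)
    (hf : ∀ t ≥ t₀, HasDerivAt f (f' t) t) (hf' : ∀ t > t₀, G * exp (-(γ * t)) ≤ f' t) :
    MonotoneOn (fun t => f t + G / γ * exp (-(γ * t))) (Ici t₀) := by
  have hexp (t : ℝ) : HasDerivAt (fun t => G / γ * exp (-(γ * t))) (-(G * exp (-(γ * t)))) t :=
    (((hasDerivAt_id t).const_mul γ).neg.exp.const_mul (G / γ)).congr_deriv (by simp; field_simp)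
  refine monotoneOn_of_hasDerivWithinAt_nonneg (f' := fun t => f' t - G * exp (-(γ * t)))
    (convex_Ici t₀) (fun t ht => ((hf t ht).add (hexp t)).continuousAt.continuousWithinAt)
    (fun t ht => ?_) (fun t ht => ?_) <;> rw [interior_Ici] at ht
  · exact ((hf t (le_of_lt ht)).add (hexp t)).hasDerivWithinAt.congr_deriv (by ring)
  · linarith [hf' t ht]

lemma antitoneOn_add_div_mul_exp_of_deriv_le {f f' : ℝ → ℝ} {t₀ G γ : ℝ} (hγ : γ ≠ 0)
    (hf : ∀ t ≥ t₀, HasDerivAt f (f' t) t) (hf' : ∀ t > t₀, f' t ≤ G * exp (-(γ * t))) :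
    AntitoneOn (fun t => f t + G / γ * exp (-(γ * t))) (Ici t₀) := by
  intro s hs t ht hst
  have := monotoneOn_add_div_mul_exp_of_le_deriv (f := -f) (G := -G) hγ
    (fun t ht => (hf t ht).neg) (fun t ht => by linarith [hf' t ht]) hs ht hst
  simp only [Pi.neg_apply, neg_div, neg_mul] at this
  linarith

lemma AntitoneOn.exists_tendsto_atTop {f : ℝ → ℝ} {t₀ m : ℝ} (hf : AntitoneOn f (Ici t₀))
    (hm : ∀ t ≥ t₀, m ≤ f t) : ∃ C, Tendsto f atTop (𝓝 C) := by
  have hanti : Antitone fun t : Ici t₀ => f t := fun s t hst => hf s.2 t.2 hst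
  exact ⟨_, tendsto_comp_val_Ici_atTop.1 <|
    tendsto_atTop_ciInf hanti ⟨m, by rintro _ ⟨t, rfl⟩; exact hm t t.2⟩⟩

lemma le_add_of_deriv_le_riccati {f f' : ℝ → ℝ} {a b c K : ℝ} (hab : a < b) (hc : 0 < c)
    (hK : 0 < K) (hf : ∀ x ∈ Icc a b, HasDerivAt f (f' x) x)
    (hf' : ∀ x ∈ Ico a b, f' x ≤ c / 2 * (K ^ 2 - f x ^ 2)) :
    f b ≤ K + 2 / (c * (b - a)) := by
  -- The barrier `K + (c/2 (x - a + δ))⁻¹` solves `B' = -(c/2) (B - K)²`, and lies above `f` at `a`.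
  set δ := 2 / (c * (|f a| + 1)) with hδ
  have hδ0 : 0 < δ := by positivity
  set w : ℝ → ℝ := fun x => c / 2 * (x - a + δ)
  have hw : ∀ x ≥ a, 0 < w x := fun x hx => by simp only [w]; nlinarith
  have hB (x : ℝ) (hx : a ≤ x) :
      HasDerivAt (fun x => K + (w x)⁻¹) (-(c / 2) * ((w x)⁻¹) ^ 2) x :=
    ((((((hasDerivAt_id x).sub_const a).add_const δ).const_mul (c / 2)).inv
      (hw x hx).ne').const_add K).congr_deriv (by simp [w]; field_simp)
  have hstart : f a ≤ K + (w a)⁻¹ := by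
    have : (w a)⁻¹ = |f a| + 1 := by simp only [w, hδ]; field_simp; ring
    rw [this]; linarith [le_abs_self (f a)]
  have key := image_le_of_deriv_right_lt_deriv_boundary'
    (fun x hx => (hf x hx).continuousAt.continuousWithinAt)
    (fun x hx => (hf x (Ico_subset_Icc_self hx)).hasDerivWithinAt) hstart
    (fun x hx => (hB x hx.1).continuousAt.continuousWithinAt)
    (fun x hx => (hB x hx.1).hasDerivWithinAt) (fun x hx hfx => ?_) ⟨hab.le, le_rfl⟩
  · have hba := sub_pos.2 hab
    calc f b ≤ K + (w b)⁻¹ := key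
      _ ≤ K + (c / 2 * (b - a))⁻¹ := by gcongr; simp only [w]; nlinarith
      _ = K + 2 / (c * (b - a)) := by field_simp
  · have hv := inv_pos.2 (hw x hx.1)
    calc f' x ≤ c / 2 * (K ^ 2 - (K + (w x)⁻¹) ^ 2) := hfx ▸ hf' x hx
      _ < -(c / 2) * ((w x)⁻¹) ^ 2 := by nlinarith [mul_pos (mul_pos hc hK) hv]

section Forcing

/-! With `e = e^{-βt} ∈ (0, 1)`, the forcings `g_{λ₂}` and `g_∞` are compared with each other and
with `α e / (1 + c/(2β))`. -/

variable {α β c e : ℝ}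

lemma forcing_le_forcingInf {lam : ℝ} (hα : 0 ≤ α) (hβ : 0 < β) (hc : 0 < c) (hlam : 0 ≤ lam)
    (he : e ∈ Ioo 0 1) :
    α * lam * e / (1 + c / (2 * β) * lam * (1 - e)) ≤ 2 * α * β / c * e / (1 - e) := by
  obtain ⟨he0, he1⟩ := he
  have : 0 ≤ lam * (1 - e) := mul_nonneg hlam (by linarith)
  rw [div_le_div_iff₀ (by positivity) (by linarith)]
  field_simp
  nlinarith [mul_nonneg (mul_nonneg hα hβ.le) he0.le]

lemma le_forcing {lam : ℝ} (hα : 0 ≤ α) (hβ : 0 < β) (hc : 0 < c) (hlam : 1 ≤ lam)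
    (he : e ∈ Ioo 0 1) :
    α / (1 + c / (2 * β)) * e ≤ α * lam * e / (1 + c / (2 * β) * lam * (1 - e)) := by
  obtain ⟨he0, he1⟩ := he
  have : 0 ≤ lam * (1 - e) := mul_nonneg (by linarith) (by linarith)
  rw [div_mul_eq_mul_div, div_le_div_iff₀ (by positivity) (by positivity)]
  field_simp
  nlinarith [mul_nonneg (mul_nonneg hα he0.le) (mul_nonneg hc.le he0.le),
    mul_nonneg (mul_nonneg hα he0.le) (sub_nonneg.2 hlam), mul_nonneg hα he0.le]

lemma le_forcingInf (hα : 0 ≤ α) (hβ : 0 < β) (hc : 0 < c) (he : e ∈ Ioo 0 1) :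
    α / (1 + c / (2 * β)) * e ≤ 2 * α * β / c * e / (1 - e) := by
  obtain ⟨he0, he1⟩ := he
  rw [div_mul_eq_mul_div, div_le_div_iff₀ (by positivity) (by linarith)]
  field_simp
  nlinarith [mul_nonneg (mul_nonneg hα he0.le) (mul_nonneg hc.le he0.le),
    mul_nonneg (mul_nonneg hα he0.le) hβ.le, mul_nonneg hα he0.le]

lemma forcingInf_le {A t : ℝ} (hβ : 0 < β) (hA : 0 ≤ A) (ht : 1 ≤ t) :
    A * exp (-(β * t)) / (1 - exp (-(β * t))) ≤ A / (1 - exp (-β)) * exp (-(β * t)) := by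
  have h1 : exp (-(β * t)) ≤ exp (-β) := exp_le_exp.2 (by nlinarith)
  have h2 : 0 < 1 - exp (-β) := sub_pos.2 (exp_lt_one_iff.2 (by linarith))
  rw [div_mul_eq_mul_div]
  gcongr

lemma exp_neg_mul_mem_Ioo {t : ℝ} (hβ : 0 < β) (ht : 0 < t) : exp (-(β * t)) ∈ Ioo 0 1 :=
  ⟨exp_pos _, exp_lt_one_iff.2 (by nlinarith)⟩

end Forcing

def IsRiccatiSolution (α c : ℝ) (g y : ℝ → ℝ) : Prop :=
  ∀ t > 0, HasDerivAt y (-(α * y t) - c / 2 * y t ^ 2 + g t) t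

namespace IsRiccatiSolution

variable {α β c a t₀ G : ℝ} {g y : ℝ → ℝ}

lemma hasDerivAt_exp_mul (hy : IsRiccatiSolution α c g y) {t : ℝ} (ht : 0 < t) :
    HasDerivAt (fun s => exp (α * s) * y s) (exp (α * t) * (g t - c / 2 * y t ^ 2)) t :=
  (((hasDerivAt_id t).const_mul α).exp.mul (hy t ht)).congr_deriv (by simp; ring)

lemma antitoneOn_exp_mul_add (hy : IsRiccatiSolution α c g y) (hc : 0 ≤ c) (hαβ : α < β)
    (ht₀ : 0 < t₀) (hg : ∀ t ≥ t₀, g t ≤ G * exp (-(β * t))) :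
    AntitoneOn (fun t => exp (α * t) * y t + G / (β - α) * exp (-((β - α) * t))) (Ici t₀) := by
  refine antitoneOn_add_div_mul_exp_of_deriv_le (sub_pos.2 hαβ).ne'
    (fun t ht => hy.hasDerivAt_exp_mul (ht₀.trans_le ht)) fun t ht => ?_
  calc exp (α * t) * (g t - c / 2 * y t ^ 2) ≤ exp (α * t) * (G * exp (-(β * t))) := by
        gcongr; nlinarith [hg t ht.le, sq_nonneg (y t)]
    _ = G * exp (-((β - α) * t)) := by rw [mul_left_comm, ← exp_add]; ring_nf

lemma exp_mul_le (hy : IsRiccatiSolution α c g y) (hc : 0 ≤ c) (hαβ : α < β) (hG : 0 ≤ G)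
    (ht₀ : 0 < t₀) (hg : ∀ t ≥ t₀, g t ≤ G * exp (-(β * t))) {t : ℝ} (ht : t₀ ≤ t) :
    exp (α * t) * y t ≤ exp (α * t₀) * y t₀ + G / (β - α) * exp (-((β - α) * t₀)) := by
  have hanti := hy.antitoneOn_exp_mul_add hc hαβ ht₀ hg self_mem_Ici ht ht
  have hγ := sub_pos.2 hαβ
  have hrem : 0 ≤ G / (β - α) * exp (-((β - α) * t)) := by positivity
  linarith

lemma exists_tendsto_exp_mul (hy : IsRiccatiSolution α c g y) (hc : 0 ≤ c) (hαβ : α < β)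
    (hG : 0 ≤ G) (ht₀ : 0 < t₀) (hg : ∀ t ≥ t₀, g t ≤ G * exp (-(β * t)))
    (hy0 : ∀ t > 0, 0 ≤ y t) :
    ∃ C, Tendsto (fun t => exp (α * t) * y t) atTop (𝓝 C) := by
  have hγ := sub_pos.2 hαβ
  obtain ⟨C, hC⟩ := (hy.antitoneOn_exp_mul_add hc hαβ ht₀ hg).exists_tendsto_atTop
    (m := 0) fun t ht => by have := hy0 t (ht₀.trans_le ht); positivity
  have hdecay : Tendsto (fun t => G / (β - α) * exp (-((β - α) * t))) atTop (𝓝 0) := by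
    simpa using (tendsto_exp_neg_atTop_nhds_zero.comp
      (tendsto_id.const_mul_atTop hγ)).const_mul (G / (β - α))
  exact ⟨C - 0, (hC.sub hdecay).congr fun t => by ring⟩

lemma le_of_forcing_le (hy : IsRiccatiSolution α c g y) (hα : 0 ≤ α) (hc : 0 < c) {K b : ℝ}
    (hK : 0 < K) (ht₀ : 0 < t₀) (hb : t₀ < b) (hy0 : ∀ t > 0, 0 ≤ y t)
    (hg : ∀ t ∈ Ico t₀ b, g t ≤ c / 2 * K ^ 2) :
    y b ≤ K + 2 / (c * (b - t₀)) :=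
  le_add_of_deriv_le_riccati hb hc hK (fun t ht => hy t (ht₀.trans_le ht.1)) fun t ht => by
    nlinarith [hg t ht, hy0 t (ht₀.trans_le ht.1)]

lemma le_exp_mul (hy : IsRiccatiSolution α c g y) (hα : 0 < α) (hc : 0 < c) (hβ : 0 < β)
    (ha : 0 ≤ a) (ht₀ : 0 < t₀) (hy0 : ∀ t > 0, 0 ≤ y t) {B : ℝ}
    (hB : ∀ t ≥ t₀, exp (α * t) * y t ≤ B) (hg : ∀ t ≥ t₀, a * exp (-(β * t)) ≤ g t)
    {t : ℝ} (ht : t₀ ≤ t) :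
    exp (-(c * B / (2 * α))) * a / β * (exp (-(β * t₀)) - exp (-(β * t))) ≤ exp (α * t) * y t := by
  -- Integrating factor `E(t) = exp(-(cB/2α) e^{-αt})`: as `z = e^{αt} y ≤ B`, the quadratic loss
  -- `(c/2) e^{-αt} z²` is at most `(cB/2) e^{-αt} z`, so `(z E)' ≥ E e^{αt} g`.
  set κ := c * B / (2 * α)
  have hpos : ∀ s ≥ t₀, 0 < s := fun s hs => ht₀.trans_le hs
  have hB0 : 0 ≤ B := (mul_nonneg (exp_pos _).le (hy0 t₀ ht₀)).trans (hB t₀ le_rfl)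
  have hκ : 0 ≤ κ := by positivity
  set E : ℝ → ℝ := fun s => exp (-(κ * exp (-(α * s))))
  have hE (s : ℝ) : HasDerivAt E (E s * (c * B / 2 * exp (-(α * s)))) s :=
    ((((hasDerivAt_id s).const_mul α).neg.exp.const_mul κ).neg.exp).congr_deriv
      (by simp [E, κ]; field_simp)
  have hQ (s : ℝ) (hs : t₀ ≤ s) : HasDerivAt (fun s => exp (α * s) * y s * E s)
      (E s * (exp (α * s) * g s + c / 2 * y s * (B - exp (α * s) * y s))) s := by
    have h1 : exp (α * s) * exp (-(α * s)) = 1 := by rw [← exp_add]; simp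
    refine ((hy.hasDerivAt_exp_mul (hpos s hs)).mul (hE s)).congr_deriv ?_
    linear_combination (c * B / 2 * E s * y s) * h1
  have hQ' (s : ℝ) (hs : t₀ < s) : exp (-κ) * a * exp (-(β * s)) ≤
      E s * (exp (α * s) * g s + c / 2 * y s * (B - exp (α * s) * y s)) := by
    have hEκ : exp (-κ) ≤ E s := exp_le_exp.2 <| neg_le_neg <|
      mul_le_of_le_one_right hκ (exp_le_one_iff.2 (by nlinarith [hpos s hs.le]))
    have hg0 : 0 ≤ g s := (by positivity : 0 ≤ a * exp (-(β * s))).trans (hg s hs.le)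
    have hloss : 0 ≤ c / 2 * y s * (B - exp (α * s) * y s) :=
      mul_nonneg (mul_nonneg (by positivity) (hy0 s (hpos s hs.le))) (sub_nonneg.2 (hB s hs.le))
    have hexp : 1 ≤ exp (α * s) := one_le_exp (by nlinarith [hpos s hs.le])
    calc exp (-κ) * a * exp (-(β * s)) ≤ E s * (1 * g s) := by
          rw [mul_assoc, one_mul]; gcongr; exact hg s hs.le
      _ ≤ E s * (exp (α * s) * g s + c / 2 * y s * (B - exp (α * s) * y s)) := by
          gcongr
          exact le_add_of_le_of_nonneg (by gcongr) hloss
  have hmono := monotoneOn_add_div_mul_exp_of_le_deriv hβ.ne' hQ hQ' self_mem_Ici ht ht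
  have hQ0 : 0 ≤ exp (α * t₀) * y t₀ * E t₀ := by have := hy0 t₀ ht₀; positivity
  have hQz : exp (α * t) * y t * E t ≤ exp (α * t) * y t :=
    mul_le_of_le_one_right (by have := hy0 t (hpos t ht); positivity)
      (exp_le_one_iff.2 (by have := exp_pos (-(α * t)); nlinarith))
  simp only at hmono
  nlinarith

end IsRiccatiSolution

theorem exists_bounds_of_tendsto_exp_mul {α β c G a : ℝ} (hα : 0 < α) (hαβ : α < β) (hc : 0 < c)
    (hG : 0 ≤ G) (ha : 0 < a) :
    ∃ m M : ℝ, 0 < m ∧ m ≤ M ∧ ∀ g y : ℝ → ℝ,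
      (∀ t ≥ 1, g t ≤ G * exp (-(β * t))) → (∀ t > 0, a * exp (-(β * t)) ≤ g t) →
      (∀ t > 0, 0 ≤ y t) → IsRiccatiSolution α c g y →
      ∀ C, Tendsto (fun t => exp (α * t) * y t) atTop (𝓝 C) → m ≤ C ∧ C ≤ M := by
  have hβ := hα.trans hαβ
  have hγ := sub_pos.2 hαβ
  set K := 2 * G / c + 1
  have hK : 0 < K := by positivity
  set B := exp (α * 2) * (K + 2 / c) + G / (β - α)
  set m := exp (-(c * B / (2 * α))) * a / β * (exp (-(β * 2)) - exp (-(β * 3)))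
  have hm : 0 < m := by
    have : exp (-(β * 3)) < exp (-(β * 2)) := exp_lt_exp.2 (by linarith)
    have := sub_pos.2 this; positivity
  refine ⟨m, max m B, hm, le_max_left _ _, fun g y hgG hga hy0 hy C hC => ?_⟩
  have hy2 : y 2 ≤ K + 2 / c := by
    have hGK : G ≤ c / 2 * K ^ 2 := by simp only [K]; field_simp; nlinarith
    have := hy.le_of_forcing_le hα.le hc hK one_pos one_lt_two hy0 fun t ht =>
      (hgG t ht.1).trans <| (mul_le_of_le_one_right hG
        (exp_le_one_iff.2 (by nlinarith [ht.1]))).trans hGK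
    norm_num at this
    exact this
  have hz (t : ℝ) (ht : 2 ≤ t) : exp (α * t) * y t ≤ B := by
    have hdecay : exp (-((β - α) * 2)) ≤ 1 := exp_le_one_iff.2 (by nlinarith)
    calc exp (α * t) * y t ≤ exp (α * 2) * y 2 + G / (β - α) * exp (-((β - α) * 2)) :=
          hy.exp_mul_le hc.le hαβ hG two_pos (fun t ht => hgG t (by linarith)) ht
      _ ≤ exp (α * 2) * (K + 2 / c) + G / (β - α) := by
          gcongr; exact mul_le_of_le_one_right (by positivity) hdecay
  have hzm (t : ℝ) (ht : 3 ≤ t) : m ≤ exp (α * t) * y t := by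
    refine le_trans ?_ (hy.le_exp_mul hα hc hβ ha.le two_pos hy0 hz
      (fun t ht => hga t (by linarith)) (by linarith : (2 : ℝ) ≤ t))
    have : exp (-(β * t)) ≤ exp (-(β * 3)) := exp_le_exp.2 (by nlinarith)
    simp only [m]; gcongr
  exact ⟨ge_of_tendsto hC (eventually_atTop.2 ⟨3, hzm⟩),
    le_of_tendsto hC (eventually_atTop.2 ⟨2, fun t ht => (hz t ht).trans (le_max_right _ _)⟩)⟩

/-- (Lemma 4.7 of the paper.) For the Riccati equation
`y' = −α y − (c/2) y² + g(t)` on `(0,∞)` with forcing `g = g_{λ₂}` or `g = g_∞`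
(the formal limit as `λ₂ → ∞`), every nonnegative solution satisfies that
`C = lim_{t→∞} e^{αt} y(t)` exists; moreover there are constants `0 < m ≤ M < ∞`
(depending only on `α, β, c`) bounding this limit uniformly over `λ₂ ∈ [1,∞]` and
over all nonnegative solutions. -/
theorem stmt18 (α β c : ℝ) (hα : 0 < α) (hαβ : α < β) (hc : 0 < c)
    (g_ : ℝ → ℝ → ℝ)
    (hg : ∀ lam₂ t, g_ lam₂ t =
      α * lam₂ * Real.exp (-(β * t)) /
        (1 + c / (2 * β) * lam₂ * (1 - Real.exp (-(β * t)))))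
    (ginf : ℝ → ℝ)
    (hginf : ∀ t, ginf t =
      2 * α * β / c * Real.exp (-(β * t)) / (1 - Real.exp (-(β * t)))) :
    -- existence of the limit for every admissible forcing and nonnegative solution
    (∀ g : ℝ → ℝ, ((∃ lam₂ ≥ (0 : ℝ), g = g_ lam₂) ∨ g = ginf) →
      ∀ y : ℝ → ℝ, (∀ t > (0 : ℝ), 0 ≤ y t) →
        (∀ t > (0 : ℝ), HasDerivAt y (-(α * y t) - c / 2 * y t ^ 2 + g t) t) →
        ∃ C : ℝ, Tendsto (fun t : ℝ => Real.exp (α * t) * y t) atTop (𝓝 C)) ∧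
    -- uniform positive lower and finite upper bounds for `λ₂ ∈ [1,∞]`
    (∃ m M : ℝ, 0 < m ∧ m ≤ M ∧
      ∀ g : ℝ → ℝ, ((∃ lam₂ ≥ (1 : ℝ), g = g_ lam₂) ∨ g = ginf) →
        ∀ y : ℝ → ℝ, (∀ t > (0 : ℝ), 0 ≤ y t) →
          (∀ t > (0 : ℝ), HasDerivAt y (-(α * y t) - c / 2 * y t ^ 2 + g t) t) →
          ∀ C : ℝ, Tendsto (fun t : ℝ => Real.exp (α * t) * y t) atTop (𝓝 C) →
            m ≤ C ∧ C ≤ M) := by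
  have hβ := hα.trans hαβ
  set G := 2 * α * β / c / (1 - exp (-β))
  have hG : 0 ≤ G := div_nonneg (by positivity) (sub_pos.2 (exp_lt_one_iff.2 (by linarith))).le
  have hupper (g : ℝ → ℝ) (hadm : (∃ lam₂ ≥ (0 : ℝ), g = g_ lam₂) ∨ g = ginf) (t : ℝ)
      (ht : t ≥ 1) : g t ≤ G * exp (-(β * t)) := by
    have hinf := forcingInf_le (A := 2 * α * β / c) hβ (by positivity) ht
    rcases hadm with ⟨lam, hlam, rfl⟩ | rfl
    · rw [hg]
      exact (forcing_le_forcingInf hα.le hβ hc hlam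
        (exp_neg_mul_mem_Ioo hβ (by linarith))).trans hinf
    · rwa [hginf]
  have hlower (g : ℝ → ℝ) (hadm : (∃ lam₂ ≥ (1 : ℝ), g = g_ lam₂) ∨ g = ginf) (t : ℝ)
      (ht : t > 0) : α / (1 + c / (2 * β)) * exp (-(β * t)) ≤ g t := by
    rcases hadm with ⟨lam, hlam, rfl⟩ | rfl
    · rw [hg]; exact le_forcing hα.le hβ hc hlam (exp_neg_mul_mem_Ioo hβ ht)
    · rw [hginf]; exact le_forcingInf hα.le hβ hc (exp_neg_mul_mem_Ioo hβ ht)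
  obtain ⟨m, M, hm, hmM, hbounds⟩ :=
    exists_bounds_of_tendsto_exp_mul (a := α / (1 + c / (2 * β))) hα hαβ hc hG (by positivity)
  refine ⟨fun g hadm y hy0 hy => IsRiccatiSolution.exists_tendsto_exp_mul hy hc.le hαβ hG
    one_pos (hupper g hadm) hy0, m, M, hm, hmM, fun g hadm y hy0 hy =>
    hbounds g y (hupper g (hadm.imp_left ?_)) (hlower g hadm) hy0 hy⟩
  exact fun ⟨lam, hlam, h⟩ => ⟨lam, by linarith, h⟩
end
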